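/- (Exponential moments of meeting times, uniformly in the perturbation) Let A be a transition matrix on S whose induced chain is uniformly ergodic, and let γ ∈ (0,1). Then for every ε > 0 there exists β̃ > 0, depending only on A, γ and ε, such that for every transition matrix B with B ⪰_γ A the following holds: let X and Y be two independent copies of the Markov chain on S with transition matrix B, and let T := inf{t ≥ 0 : X_t = Y_t} be their first meeting time. Then sup_{x,y∈S} E_{xy}[e^{βT}] ≤ 1 + ε for all β ∈ [0, β̃], where E_{xy} denotes expectation conditional on X_0 = x and Y_0 = y. -/

import Mathlib

open MeasureTheory Finset
open scoped ENNReal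

noncomputable section

namespace DiscreteEBSDE

/-- A column-stochastic transition matrix on a finite state space. -/
def IsTransMat {S : Type*} [Fintype S] (B : Matrix S S ℝ) : Prop :=
  (∀ i j, 0 ≤ B i j) ∧ ∀ j, ∑ i, B i j = 1

/-- A probability vector on a finite state space. -/
def IsProbVec {S : Type*} [Fintype S] (μ : S → ℝ) : Prop :=
  (∀ i, 0 ≤ μ i) ∧ ∑ i, μ i = 1

/-- Total variation distance between measures on a finite state space. -/
def tvDist {S : Type*} [Fintype S] (μ ν : S → ℝ) : ℝ := (∑ x, |μ x - ν x|) / 2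

/-- The chain induced by the column-stochastic matrix `B` is uniformly ergodic:
`B^t μ → π` in total variation, at exponential rate, uniformly in the initial law `μ`. -/
def UniformlyErgodic {S : Type*} [Fintype S] [DecidableEq S] (B : Matrix S S ℝ) : Prop :=
  ∃ π : S → ℝ, IsProbVec π ∧ ∃ R ρ : ℝ, 0 < R ∧ 0 < ρ ∧
    ∀ (t : ℕ) (μ : S → ℝ), IsProbVec μ →
      tvDist ((B ^ t).mulVec μ) π ≤ R * Real.exp (-ρ * t)

/-- `(X, Y)` is (under `μ`) a pair of independent copies of the Markov chain with
column-stochastic transition matrix `B`: the Markov property on path cylinders, with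
product transition probabilities. -/
def IsPairChain {S : Type*} {Ω : Type*} [MeasurableSpace Ω] (B : Matrix S S ℝ)
    (μ : Measure Ω) (X Y : ℕ → Ω → S) : Prop :=
  ∀ (t : ℕ) (w v : ℕ → S) (i k : S),
    μ ({ω | X (t + 1) ω = i ∧ Y (t + 1) ω = k} ∩
        {ω | ∀ s ≤ t, X s ω = w s ∧ Y s ω = v s}) =
      ENNReal.ofReal (B i (w t) * B k (v t)) *
        μ {ω | ∀ s ≤ t, X s ω = w s ∧ Y s ω = v s}

/-- The first meeting time of `X` and `Y` at or after time `t₀`, valued in `ℕ∞`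
(`⊤` if they never meet). -/
def meetTime {S : Type*} {Ω : Type*} (X Y : ℕ → Ω → S) (t₀ : ℕ) (ω : Ω) : ℕ∞ :=
  sInf {n : ℕ∞ | ∃ t : ℕ, n = (t : ℕ∞) ∧ t₀ ≤ t ∧ X t ω = Y t ω}

/-- `e^{β T}` for `T : ℕ∞`, equal to `∞` when `T = ∞`. -/
def expVal (β : ℝ) : ℕ∞ → ℝ≥0∞ :=
  WithTop.recTopCoe ⊤ fun m : ℕ => ENNReal.ofReal (Real.exp (β * m))

/-- `j` leads to `i` for the chain with column-stochastic matrix `B`. -/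
def Leads {S : Type*} [Fintype S] [DecidableEq S] (B : Matrix S S ℝ) (j i : S) : Prop :=
  ∃ n : ℕ, 0 < (B ^ n) i j

/-- Two states communicate if each leads to the other. -/
def Communicates {S : Type*} [Fintype S] [DecidableEq S] (B : Matrix S S ℝ)
    (i j : S) : Prop :=
  Leads B i j ∧ Leads B j i

/-- `C` is a communicating class of the chain `B`. -/
def IsCommClass {S : Type*} [Fintype S] [DecidableEq S] (B : Matrix S S ℝ)
    (C : Set S) : Prop :=
  C.Nonempty ∧ ∀ i ∈ C, ∀ j, j ∈ C ↔ Communicates B i j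

/-- `C` is a closed communicating class of the chain `B`. -/
def IsClosedCommClass {S : Type*} [Fintype S] [DecidableEq S] (B : Matrix S S ℝ)
    (C : Set S) : Prop :=
  IsCommClass B C ∧ ∀ j ∈ C, ∀ i, Leads B j i → i ∈ C

/-- The chain `B` is aperiodic: every state in a closed communicating class has
period `1` (every common divisor of its return times is `1`). -/
def AperiodicChain {S : Type*} [Fintype S] [DecidableEq S] (B : Matrix S S ℝ) : Prop :=
  ∀ i : S, (∃ C : Set S, IsClosedCommClass B C ∧ i ∈ C) →
    ∀ d : ℕ, (∀ n : ℕ, 1 ≤ n → 0 < (B ^ n) i i → d ∣ n) → d = 1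

/-- The Nummelin split matrix `𝓑` on the split space `S × Bool` (second coordinate
`true` is the layer `S₁`): columns from `S₀` follow `C = (1-γ)⁻¹(B - γA)`, columns from
`S₁` follow `A`, and the result is split between the layers with masses `1-γ` and `γ`. -/
def splitMatrix {N : ℕ} (γ : ℝ) (A B : Matrix (Fin N) (Fin N) ℝ) :
    Matrix (Fin N × Bool) (Fin N × Bool) ℝ := fun p q =>
  (if p.2 then γ else 1 - γ) *
    (if q.2 then A p.1 q.1 else (1 - γ)⁻¹ * (B p.1 q.1 - γ * A p.1 q.1))

/-!
Uniform ergodicity of `A` gives a Doeblin minorisation: some state `i₀` receives mass at least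
`c > 0` from every column of `A ^ m`. Since `B ≥ γ A` entrywise, `B ^ m ≥ γ ^ m A ^ m`, so every
admissible `B` satisfies it with the same `δ = γ ^ m c`. Whatever two independent copies have done
up to time `n`, both sit at `i₀` at time `n + m` with probability at least `δ ^ 2`; hence
`P(T > n) ≤ q ^ ⌊n / m⌋` with `q = 1 - δ ^ 2`, a geometric tail whose constants depend only on `A`
and `γ`. Integrating `e^{βT} = 1 + ∑_{n < T} (e^β - 1) e^{βn}` then gives
`E e^{βT} ≤ 1 + (e^β - 1) q⁻¹ / (1 - e^β q^{1/m})`, which tends to `1` as `β ↓ 0`.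
-/

section Doeblin

variable {S : Type*} [Fintype S]

lemma abs_sub_le_two_mul_tvDist (μ ν : S → ℝ) (x : S) : |μ x - ν x| ≤ 2 * tvDist μ ν := by
  rw [tvDist, mul_div_cancel₀ _ two_ne_zero]
  exact single_le_sum (f := fun x => |μ x - ν x|) (fun _ _ => abs_nonneg _) (mem_univ x)

variable [DecidableEq S]

lemma pow_apply_nonneg {A : Matrix S S ℝ} (hA : ∀ i j, 0 ≤ A i j) (n : ℕ) (i j : S) :
    0 ≤ (A ^ n) i j := by
  induction n generalizing j with
  | zero => rw [pow_zero, Matrix.one_apply]; positivity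
  | succ n ih =>
    rw [pow_succ, Matrix.mul_apply]
    exact sum_nonneg fun a _ => mul_nonneg (ih a) (hA a j)

lemma pow_apply_le_pow_apply {A B : Matrix S S ℝ} (hA : ∀ i j, 0 ≤ A i j)
    (hAB : ∀ i j, A i j ≤ B i j) (n : ℕ) (i j : S) : (A ^ n) i j ≤ (B ^ n) i j := by
  induction n generalizing j with
  | zero => rfl
  | succ n ih =>
    simp only [pow_succ, Matrix.mul_apply]
    exact sum_le_sum fun a _ => mul_le_mul (ih a) (hAB a j) (hA a j)
      (pow_apply_nonneg (fun i j => (hA i j).trans (hAB i j)) n i a)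

lemma pow_mul_pow_apply_le {A B : Matrix S S ℝ} {γ : ℝ} (hγ : 0 ≤ γ) (hA : ∀ i j, 0 ≤ A i j)
    (hAB : ∀ i j, γ * A i j ≤ B i j) (n : ℕ) (i j : S) : γ ^ n * (A ^ n) i j ≤ (B ^ n) i j := by
  simpa [smul_pow] using
    pow_apply_le_pow_apply (A := γ • A) (fun i j => mul_nonneg hγ (hA i j)) hAB n i j

lemma isProbVec_single (j : S) : IsProbVec (Pi.single j 1 : S → ℝ) :=
  ⟨fun i => by by_cases h : i = j <;> simp [h], by simp⟩

lemma UniformlyErgodic.exists_doeblin {A : Matrix S S ℝ} (hA : UniformlyErgodic A) :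
    ∃ m ≠ 0, ∃ (i₀ : S) (c : ℝ), 0 < c ∧ c ≤ 1 ∧ ∀ j, c ≤ (A ^ m) i₀ j := by
  obtain ⟨π, hπ, R, ρ, -, hρ, herg⟩ := hA
  obtain ⟨i₀, hi₀⟩ : ∃ i, 0 < π i := by
    by_contra! h
    have := sum_nonpos fun i (_ : i ∈ univ) => h i
    linarith [hπ.2]
  have hπ₀ : π i₀ ≤ 1 := hπ.2 ▸ single_le_sum (fun i _ => hπ.1 i) (mem_univ i₀)
  have hdecay : Filter.Tendsto (fun m : ℕ => R * Real.exp (-ρ * m)) Filter.atTop (nhds 0) := by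
    simpa using (Real.tendsto_exp_neg_atTop_nhds_zero.comp
      ((tendsto_natCast_atTop_atTop).const_mul_atTop hρ)).const_mul R
  obtain ⟨m, hmR, hm⟩ := ((hdecay.eventually (gt_mem_nhds (by positivity : 0 < π i₀ / 4))).and
    (Filter.eventually_ge_atTop 1)).exists
  refine ⟨m, by omega, i₀, π i₀ / 2, by positivity, by linarith, fun j => ?_⟩
  have hclose := (abs_sub_le_two_mul_tvDist _ π i₀).trans
    (mul_le_mul_of_nonneg_left (herg m _ (isProbVec_single j)) zero_le_two)
  rw [Matrix.mulVec_single_one, Matrix.col_apply] at hclose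
  linarith [(abs_le.mp hclose).1]

lemma UniformlyErgodic.exists_uniform_doeblin {A : Matrix S S ℝ} (hA : ∀ i j, 0 ≤ A i j)
    (hAerg : UniformlyErgodic A) {γ : ℝ} (hγ : γ ∈ Set.Ioo (0 : ℝ) 1) :
    ∃ m ≠ 0, ∃ (i₀ : S) (δ : ℝ), 0 < δ ∧ δ < 1 ∧
      ∀ B : Matrix S S ℝ, (∀ i j, γ * A i j ≤ B i j) → ∀ j, δ ≤ (B ^ m) i₀ j := by
  obtain ⟨m, hm, i₀, c, hc0, hc1, hAm⟩ := hAerg.exists_doeblin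
  obtain ⟨hγ0, hγ1⟩ := hγ
  refine ⟨m, hm, i₀, γ ^ m * c, by positivity, ?_, fun B hAB j => ?_⟩
  · nlinarith [pow_lt_one₀ hγ0.le hγ1 hm]
  · exact (mul_le_mul_of_nonneg_left (hAm j) (by positivity)).trans
      (pow_mul_pow_apply_le hγ0.le hA hAB m i₀ j)

end Doeblin

section RealBounds

open Real Filter Topology

lemma pow_div_le_inv_mul_rpow_pow {q : ℝ} (hq0 : 0 < q) (hq1 : q ≤ 1) {m : ℕ} (hm : m ≠ 0)
    (n : ℕ) : q ^ (n / m) ≤ q⁻¹ * (q ^ (m⁻¹ : ℝ)) ^ n := by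
  set θ := q ^ (m⁻¹ : ℝ)
  have hθm : θ ^ m = q := rpow_inv_natCast_pow hq0.le hm
  calc q ^ (n / m) = q⁻¹ * θ ^ (m * (n / m + 1)) := by
        rw [pow_mul, hθm, pow_succ, mul_comm _ q, inv_mul_cancel_left₀ hq0.ne']
    _ ≤ q⁻¹ * θ ^ n := mul_le_mul_of_nonneg_left
        (pow_le_pow_of_le_one (by positivity) (rpow_le_one hq0.le hq1 (by positivity))
          (Nat.lt_mul_div_succ n (Nat.pos_of_ne_zero hm)).le) (inv_nonneg.mpr hq0.le)

lemma exists_pos_forall_geom_bound {θ : ℝ} (hθ : θ < 1) (C : ℝ) {ε : ℝ} (hε : 0 < ε) :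
    ∃ βt > 0, ∀ β, 0 ≤ β → β ≤ βt →
      exp β * θ < 1 ∧ (exp β - 1) * C / (1 - exp β * θ) ≤ ε := by
  have hlt : ∀ᶠ β in 𝓝 0, exp β * θ < 1 :=
    (continuous_exp.mul continuous_const).continuousAt.eventually_lt continuousAt_const
      (by simpa using hθ)
  have hsmall : ∀ᶠ β in 𝓝 0, (exp β - 1) * C / (1 - exp β * θ) < ε := by
    have hcont : ContinuousAt (fun β => (exp β - 1) * C / (1 - exp β * θ)) 0 :=
      ContinuousAt.div (by fun_prop) (by fun_prop) (by simp; linarith)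
    exact hcont.eventually_lt continuousAt_const (by simpa using hε)
  obtain ⟨r, hr, hball⟩ := Metric.eventually_nhds_iff.mp (hlt.and hsmall)
  refine ⟨r / 2, half_pos hr, fun β hβ0 hβr => ?_⟩
  have := hball (show dist β 0 < r by rw [Real.dist_0_eq_abs, abs_of_nonneg hβ0]; linarith)
  exact ⟨this.1, this.2.le⟩

end RealBounds

section PastEvent

variable {S Ω : Type*} {X Y : ℕ → Ω → S}

def IsPastEvent (X Y : ℕ → Ω → S) (t : ℕ) (H : Set Ω) : Prop :=
  ∀ ω ∈ H, ∀ ω', (∀ s ≤ t, X s ω' = X s ω ∧ Y s ω' = Y s ω) → ω' ∈ H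

lemma IsPastEvent.mono {t t' : ℕ} {H : Set Ω} (hH : IsPastEvent X Y t H) (htt' : t ≤ t') :
    IsPastEvent X Y t' H :=
  fun ω hω ω' h => hH ω hω ω' fun s hs => h s (hs.trans htt')

lemma IsPastEvent.inter_state {t : ℕ} {H : Set Ω} (hH : IsPastEvent X Y t H) (i k : S) :
    IsPastEvent X Y t (H ∩ {ω | X t ω = i ∧ Y t ω = k}) := by
  rintro ω ⟨hω, hi, hk⟩ ω' h
  obtain ⟨hX, hY⟩ := h t le_rfl
  exact ⟨hH ω hω ω' h, hX.trans hi, hY.trans hk⟩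

end PastEvent

section PairChain

variable {Ω : Type*} [MeasurableSpace Ω]

lemma measure_eq_sum_inter_fiber {α : Type*} [Fintype α] (μ : Measure Ω) (f : Ω → α)
    (hf : ∀ a, MeasurableSet (f ⁻¹' {a})) (s : Set Ω) :
    μ s = ∑ a, μ (s ∩ f ⁻¹' {a}) := by
  have := sum_measure_preimage_singleton (μ := μ.restrict s) univ fun a _ => hf a
  simp only [Measure.restrict_apply (hf _), coe_univ, Set.preimage_univ,
    Measure.restrict_apply_univ] at this
  simp only [this.symm, Set.inter_comm]

variable {S : Type*} {X Y : ℕ → Ω → S}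

lemma measurableSet_state (hX : ∀ t i, MeasurableSet {ω | X t ω = i})
    (hY : ∀ t i, MeasurableSet {ω | Y t ω = i}) (t : ℕ) (i k : S) :
    MeasurableSet {ω | X t ω = i ∧ Y t ω = k} :=
  (hX t i).inter (hY t k)

variable [Fintype S]

lemma measure_eq_sum_inter_state (hX : ∀ t i, MeasurableSet {ω | X t ω = i})
    (hY : ∀ t i, MeasurableSet {ω | Y t ω = i}) (μ : Measure Ω) (t : ℕ) (s : Set Ω) :
    μ s = ∑ z : S × S, μ (s ∩ {ω | X t ω = z.1 ∧ Y t ω = z.2}) := by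
  have hfib : ∀ z : S × S, (fun ω => (X t ω, Y t ω)) ⁻¹' {z} = {ω | X t ω = z.1 ∧ Y t ω = z.2} :=
    fun z => by ext; simp [Prod.ext_iff]
  rw [measure_eq_sum_inter_fiber μ _ (fun z => hfib z ▸ measurableSet_state hX hY t z.1 z.2) s]
  exact sum_congr rfl fun z _ => by rw [hfib]

variable {μ : Measure Ω} {B : Matrix S S ℝ}

lemma IsPairChain.measure_step_inter (hchain : IsPairChain B μ X Y)
    (hX : ∀ t i, MeasurableSet {ω | X t ω = i}) (hY : ∀ t i, MeasurableSet {ω | Y t ω = i}) {t : ℕ}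
    {H : Set Ω} (hH : IsPastEvent X Y t H) {j l : S} (hHt : H ⊆ {ω | X t ω = j ∧ Y t ω = l})
    (i k : S) :
    μ ({ω | X (t + 1) ω = i ∧ Y (t + 1) ω = k} ∩ H) = ENNReal.ofReal (B i j * B k l) * μ H := by
  -- On each cylinder `{path = p}`, `H` is either empty or everything, and `hchain` applies.
  set path : Ω → Fin (t + 1) → S × S := fun ω s => (X s ω, Y s ω)
  have path_eq_iff : ∀ ω ω', path ω' = path ω ↔ ∀ s ≤ t, X s ω' = X s ω ∧ Y s ω' = Y s ω := by
    intro ω ω'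
    simp [path, funext_iff, Fin.forall_iff]
  have hpath : ∀ p, MeasurableSet (path ⁻¹' {p}) := by
    intro p
    have : path ⁻¹' {p} = ⋂ s : Fin (t + 1), {ω | X s ω = (p s).1 ∧ Y s ω = (p s).2} := by
      ext; simp [path, funext_iff, Prod.ext_iff]
    exact this ▸ .iInter fun s => measurableSet_state hX hY _ _ _
  rw [measure_eq_sum_inter_fiber μ path hpath, measure_eq_sum_inter_fiber μ path hpath H, mul_sum]
  refine sum_congr rfl fun p _ => ?_
  rw [Set.inter_assoc]
  by_cases hp : ∃ ω₀ ∈ H, path ω₀ = p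
  · obtain ⟨ω₀, hω₀, rfl⟩ := hp
    have hcyl : H ∩ path ⁻¹' {path ω₀} = {ω | ∀ s ≤ t, X s ω = X s ω₀ ∧ Y s ω = Y s ω₀} := by
      ext ω
      simp only [Set.mem_inter_iff, Set.mem_preimage, Set.mem_singleton_iff, path_eq_iff]
      exact ⟨And.right, fun h => ⟨hH ω₀ hω₀ ω h, h⟩⟩
    obtain ⟨hj, hl⟩ := hHt hω₀
    rw [hcyl, ← hj, ← hl]
    exact hchain t _ _ i k
  · have : H ∩ path ⁻¹' {p} = ∅ := by
      ext ω
      simp only [Set.mem_inter_iff, Set.mem_preimage, Set.mem_singleton_iff,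
        Set.mem_empty_iff_false, iff_false, not_and]
      exact fun hω hωp => hp ⟨ω, hω, hωp⟩
    simp [this]

variable [DecidableEq S]

lemma IsPairChain.measure_pow_step_inter (hchain : IsPairChain B μ X Y) (hB : ∀ i j, 0 ≤ B i j)
    (hX : ∀ t i, MeasurableSet {ω | X t ω = i}) (hY : ∀ t i, MeasurableSet {ω | Y t ω = i})
    (n : ℕ) {t : ℕ} {H : Set Ω} (hH : IsPastEvent X Y t H) {j l : S}
    (hHt : H ⊆ {ω | X t ω = j ∧ Y t ω = l}) (i k : S) :
    μ ({ω | X (t + n) ω = i ∧ Y (t + n) ω = k} ∩ H) =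
      ENNReal.ofReal ((B ^ n) i j * (B ^ n) k l) * μ H := by
  induction n generalizing t H j l with
  | zero =>
    by_cases h : i = j ∧ k = l
    · obtain ⟨rfl, rfl⟩ := h
      simp [Set.inter_eq_right.mpr hHt]
    · have : {ω | X t ω = i ∧ Y t ω = k} ∩ H = ∅ := by
        refine Set.eq_empty_of_forall_notMem fun ω ⟨hik, hω⟩ => h ?_
        obtain ⟨hj, hl⟩ := hHt hω
        exact ⟨hik.1.symm.trans hj, hik.2.symm.trans hl⟩
      rw [add_zero, this, pow_zero, Matrix.one_apply, Matrix.one_apply]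
      split_ifs <;> simp_all
  | succ n ih =>
    have hterm : ∀ z : S × S,
        μ ({ω | X (t + (n + 1)) ω = i ∧ Y (t + (n + 1)) ω = k} ∩ H ∩
          {ω | X (t + 1) ω = z.1 ∧ Y (t + 1) ω = z.2}) =
        ENNReal.ofReal ((B ^ n) i z.1 * B z.1 j * ((B ^ n) k z.2 * B z.2 l)) * μ H := by
      intro z
      rw [Set.inter_assoc, ← add_assoc, add_right_comm,
        ih ((hH.mono t.le_succ).inter_state _ _) Set.inter_subset_right, Set.inter_comm,
        hchain.measure_step_inter hX hY hH hHt, ← mul_assoc, ← ENNReal.ofReal_mul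
          (mul_nonneg (pow_apply_nonneg hB n i z.1) (pow_apply_nonneg hB n k z.2))]
      congr 2
      ring
    have hnonneg : ∀ z : S × S, 0 ≤ (B ^ n) i z.1 * B z.1 j * ((B ^ n) k z.2 * B z.2 l) :=
      fun z => mul_nonneg (mul_nonneg (pow_apply_nonneg hB n _ _) (hB _ _))
        (mul_nonneg (pow_apply_nonneg hB n _ _) (hB _ _))
    rw [measure_eq_sum_inter_state hX hY μ (t + 1), sum_congr rfl fun z _ => hterm z, ← sum_mul,
      ← ENNReal.ofReal_sum_of_nonneg fun z _ => hnonneg z, Fintype.sum_prod_type, pow_succ,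
      Matrix.mul_apply, Matrix.mul_apply, sum_mul_sum]

lemma IsPairChain.ofReal_sq_mul_le_measure_hit (hchain : IsPairChain B μ X Y)
    (hB : ∀ i j, 0 ≤ B i j) (hX : ∀ t i, MeasurableSet {ω | X t ω = i})
    (hY : ∀ t i, MeasurableSet {ω | Y t ω = i}) {m : ℕ} {i₀ : S} {δ : ℝ} (hδ : 0 ≤ δ)
    (hBm : ∀ j, δ ≤ (B ^ m) i₀ j) {t : ℕ} {H : Set Ω} (hH : IsPastEvent X Y t H) :
    ENNReal.ofReal (δ ^ 2) * μ H ≤ μ ({ω | X (t + m) ω = i₀ ∧ Y (t + m) ω = i₀} ∩ H) := by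
  rw [measure_eq_sum_inter_state hX hY μ t H, measure_eq_sum_inter_state hX hY μ t, mul_sum]
  refine sum_le_sum fun z _ => ?_
  rw [Set.inter_assoc, hchain.measure_pow_step_inter hB hX hY m (hH.inter_state _ _)
    Set.inter_subset_right]
  gcongr
  rw [sq]
  exact mul_le_mul (hBm _) (hBm _) hδ (pow_apply_nonneg hB m _ _)

end PairChain

section Apart

variable {S Ω : Type*} {X Y : ℕ → Ω → S}

def Apart (X Y : ℕ → Ω → S) (n : ℕ) : Set Ω := {ω | ∀ s ≤ n, X s ω ≠ Y s ω}

lemma isPastEvent_apart (n : ℕ) : IsPastEvent X Y n (Apart X Y n) :=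
  fun _ hω _ h s hs => (h s hs).1 ▸ (h s hs).2 ▸ hω s hs

lemma apart_subset_apart {n n' : ℕ} (h : n ≤ n') : Apart X Y n' ⊆ Apart X Y n :=
  fun _ hω s hs => hω s (hs.trans h)

lemma setOf_coe_lt_meetTime (n : ℕ) : {ω | (n : ℕ∞) < meetTime X Y 0 ω} = Apart X Y n := by
  ext ω
  refine ⟨fun h s hs hmeet => ?_, fun h => ?_⟩
  · have : meetTime X Y 0 ω ≤ s := sInf_le ⟨s, rfl, s.zero_le, hmeet⟩
    exact (lt_of_lt_of_le h this).not_ge (by exact_mod_cast hs)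
  · have : ((n + 1 : ℕ) : ℕ∞) ≤ meetTime X Y 0 ω := le_sInf <| by
      rintro _ ⟨t, rfl, -, ht⟩
      exact_mod_cast Nat.succ_le_of_lt (not_le.mp fun hts => h t hts ht)
    exact lt_of_lt_of_le (by exact_mod_cast n.lt_succ_self) this

lemma measurableSet_apart [MeasurableSpace Ω] [Countable S]
    (hX : ∀ t i, MeasurableSet {ω | X t ω = i}) (hY : ∀ t i, MeasurableSet {ω | Y t ω = i})
    (n : ℕ) : MeasurableSet (Apart X Y n) := by
  have hmeet : ∀ s, MeasurableSet {ω | X s ω = Y s ω} := fun s => by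
    have : {ω | X s ω = Y s ω} = ⋃ i, {ω | X s ω = i ∧ Y s ω = i} := by ext; simp [eq_comm]
    exact this ▸ .iUnion fun i => measurableSet_state hX hY s i i
  have : Apart X Y n = ⋂ s ∈ Set.Iic n, {ω | X s ω = Y s ω}ᶜ := by ext; simp [Apart]
  exact this ▸ .biInter (Set.to_countable _) fun s _ => (hmeet s).compl

variable [Fintype S] [DecidableEq S] [MeasurableSpace Ω] {μ : Measure Ω} {B : Matrix S S ℝ}
  {m : ℕ} {i₀ : S} {δ : ℝ}

lemma IsPairChain.measure_apart_add_le [IsFiniteMeasure μ] (hchain : IsPairChain B μ X Y)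
    (hB : ∀ i j, 0 ≤ B i j) (hX : ∀ t i, MeasurableSet {ω | X t ω = i})
    (hY : ∀ t i, MeasurableSet {ω | Y t ω = i}) (hδ0 : 0 ≤ δ) (hδ1 : δ ≤ 1)
    (hBm : ∀ j, δ ≤ (B ^ m) i₀ j) (n : ℕ) :
    μ (Apart X Y (n + m)) ≤ ENNReal.ofReal (1 - δ ^ 2) * μ (Apart X Y n) := by
  set hit := {ω | X (n + m) ω = i₀ ∧ Y (n + m) ω = i₀}
  have hsub : Apart X Y (n + m) ⊆ Apart X Y n \ hit := fun ω hω =>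
    ⟨apart_subset_apart (n.le_add_right m) hω, fun h => hω (n + m) le_rfl (h.1.trans h.2.symm)⟩
  have hsplit : ENNReal.ofReal (1 - δ ^ 2) + ENNReal.ofReal (δ ^ 2) = 1 := by
    rw [← ENNReal.ofReal_add (by nlinarith) (by positivity)]
    simp
  refine ENNReal.le_of_add_le_add_right
    (ENNReal.mul_ne_top (ENNReal.ofReal_ne_top (r := δ ^ 2)) (measure_ne_top μ (Apart X Y n))) ?_
  calc μ (Apart X Y (n + m)) + ENNReal.ofReal (δ ^ 2) * μ (Apart X Y n)
      ≤ μ (Apart X Y n \ hit) + μ (hit ∩ Apart X Y n) :=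
        add_le_add (measure_mono hsub)
          (hchain.ofReal_sq_mul_le_measure_hit hB hX hY hδ0 hBm (isPastEvent_apart n))
    _ = μ (Apart X Y n) := by
        rw [Set.inter_comm, add_comm, measure_inter_add_sdiff _ (measurableSet_state hX hY _ _ _)]
    _ = ENNReal.ofReal (1 - δ ^ 2) * μ (Apart X Y n) +
          ENNReal.ofReal (δ ^ 2) * μ (Apart X Y n) := by
        rw [← add_mul, hsplit, one_mul]

lemma IsPairChain.measure_apart_le [IsProbabilityMeasure μ] (hchain : IsPairChain B μ X Y)
    (hB : ∀ i j, 0 ≤ B i j) (hX : ∀ t i, MeasurableSet {ω | X t ω = i})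
    (hY : ∀ t i, MeasurableSet {ω | Y t ω = i}) (hδ0 : 0 ≤ δ) (hδ1 : δ ≤ 1)
    (hBm : ∀ j, δ ≤ (B ^ m) i₀ j) (n : ℕ) :
    μ (Apart X Y n) ≤ ENNReal.ofReal (1 - δ ^ 2) ^ (n / m) := by
  have hmul : ∀ k, μ (Apart X Y (k * m)) ≤ ENNReal.ofReal (1 - δ ^ 2) ^ k := by
    intro k
    induction k with
    | zero => simpa using prob_le_one
    | succ k ih =>
      rw [add_mul, one_mul, pow_succ']
      exact (hchain.measure_apart_add_le hB hX hY hδ0 hδ1 hBm _).trans (by gcongr)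
  exact (measure_mono (apart_subset_apart (Nat.div_mul_le_self n m))).trans (hmul _)

lemma IsPairChain.measure_lt_meetTime_le [IsProbabilityMeasure μ] (hchain : IsPairChain B μ X Y)
    (hB : ∀ i j, 0 ≤ B i j) (hX : ∀ t i, MeasurableSet {ω | X t ω = i})
    (hY : ∀ t i, MeasurableSet {ω | Y t ω = i}) (hm : m ≠ 0) (hδ0 : 0 ≤ δ) (hδ1 : δ < 1)
    (hBm : ∀ j, δ ≤ (B ^ m) i₀ j) (n : ℕ) :
    μ {ω | (n : ℕ∞) < meetTime X Y 0 ω} ≤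
      ENNReal.ofReal ((1 - δ ^ 2)⁻¹ * ((1 - δ ^ 2) ^ (m⁻¹ : ℝ)) ^ n) := by
  have hq0 : 0 < 1 - δ ^ 2 := by nlinarith
  rw [setOf_coe_lt_meetTime]
  refine (hchain.measure_apart_le hB hX hY hδ0 hδ1.le hBm n).trans ?_
  rw [← ENNReal.ofReal_pow hq0.le]
  exact ENNReal.ofReal_le_ofReal (pow_div_le_inv_mul_rpow_pow hq0 (by nlinarith) hm n)

end Apart

section ExponentialMoments

open Real Filter Topology

lemma expVal_coe (β : ℝ) (t : ℕ) : expVal β t = ENNReal.ofReal (exp β ^ t) := by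
  rw [← exp_nat_mul, mul_comm]
  rfl

lemma expVal_coe_eq_one_add_sum {β : ℝ} (hβ : 0 ≤ β) (t : ℕ) :
    expVal β t = 1 + ∑ n ∈ range t, ENNReal.ofReal ((exp β - 1) * exp β ^ n) := by
  have hnonneg : ∀ n : ℕ, 0 ≤ (exp β - 1) * exp β ^ n := fun n =>
    mul_nonneg (sub_nonneg.mpr (one_le_exp hβ)) (pow_nonneg (exp_pos β).le n)
  rw [expVal_coe, ← ENNReal.ofReal_sum_of_nonneg fun n _ => hnonneg n, ← ENNReal.ofReal_one,
    ← ENNReal.ofReal_add zero_le_one (sum_nonneg fun n _ => hnonneg n), ← mul_sum, mul_comm,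
    geom_sum_mul, add_sub_cancel]

variable {Ω : Type*} [MeasurableSpace Ω] {μ : Measure Ω}

lemma lintegral_expVal_eq {β : ℝ} (hβ : 0 ≤ β) {T : Ω → ℕ∞}
    (hT : ∀ n : ℕ, MeasurableSet {ω | (n : ℕ∞) < T ω}) (hfin : ∀ᵐ ω ∂μ, T ω ≠ ⊤) :
    ∫⁻ ω, expVal β (T ω) ∂μ = μ Set.univ +
      ∑' n : ℕ, ENNReal.ofReal ((exp β - 1) * exp β ^ n) * μ {ω | (n : ℕ∞) < T ω} := by
  have hpt : ∀ᵐ ω ∂μ, expVal β (T ω) = 1 + ∑' n : ℕ,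
      {ω | (n : ℕ∞) < T ω}.indicator (fun _ => ENNReal.ofReal ((exp β - 1) * exp β ^ n)) ω := by
    filter_upwards [hfin] with ω hω
    obtain ⟨t, ht⟩ := ENat.ne_top_iff_exists.mp hω
    have hmem : ∀ n : ℕ, ω ∈ {ω | (n : ℕ∞) < T ω} ↔ n ∈ range t := by
      simp [← ht]
    rw [← ht, expVal_coe_eq_one_add_sum hβ,
      tsum_eq_sum (s := range t) fun n hn => Set.indicator_of_notMem (mt (hmem n).mp hn) _]
    exact congrArg _ (sum_congr rfl fun n hn => by rw [Set.indicator_of_mem ((hmem n).mpr hn)])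
  rw [lintegral_congr_ae hpt, lintegral_add_left measurable_const, lintegral_one,
    lintegral_tsum fun n => (measurable_const.indicator (hT n)).aemeasurable]
  simp only [lintegral_indicator_const (hT _)]

lemma lintegral_expVal_le_of_tail [IsProbabilityMeasure μ] {β : ℝ} (hβ : 0 ≤ β) {T : Ω → ℕ∞}
    (hT : ∀ n : ℕ, MeasurableSet {ω | (n : ℕ∞) < T ω}) {C θ : ℝ} (hC : 0 ≤ C) (hθ : 0 ≤ θ)
    (hβθ : exp β * θ < 1) (htail : ∀ n : ℕ, μ {ω | (n : ℕ∞) < T ω} ≤ ENNReal.ofReal (C * θ ^ n)) :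
    ∫⁻ ω, expVal β (T ω) ∂μ ≤ ENNReal.ofReal (1 + (exp β - 1) * C / (1 - exp β * θ)) := by
  have hθ1 : θ < 1 := (le_mul_of_one_le_left hθ (one_le_exp hβ)).trans_lt hβθ
  have hfin : ∀ᵐ ω ∂μ, T ω ≠ ⊤ := by
    have hlim : Tendsto (fun n : ℕ => ENNReal.ofReal (C * θ ^ n)) atTop (𝓝 0) := by
      simpa using
        ENNReal.tendsto_ofReal ((tendsto_pow_atTop_nhds_zero_of_lt_one hθ hθ1).const_mul C)
    refine ae_iff.mpr (le_antisymm (ge_of_tendsto' hlim fun n => ?_) zero_le)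
    exact (measure_mono fun ω (hω : ¬T ω ≠ ⊤) => by simp [not_not.mp hω]).trans (htail n)
  have he : 0 ≤ exp β - 1 := sub_nonneg.mpr (one_le_exp hβ)
  have hnonneg : ∀ n : ℕ, 0 ≤ (exp β - 1) * C * (exp β * θ) ^ n := fun n =>
    mul_nonneg (mul_nonneg he hC) (pow_nonneg (by positivity) n)
  rw [lintegral_expVal_eq hβ hT hfin, measure_univ, ENNReal.ofReal_add zero_le_one
    (div_nonneg (mul_nonneg he hC) (sub_nonneg.mpr hβθ.le)),
    ENNReal.ofReal_one, div_eq_mul_inv, ← tsum_geometric_of_lt_one (by positivity) hβθ,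
    ← tsum_mul_left, ENNReal.ofReal_tsum_of_nonneg hnonneg
      ((summable_geometric_of_lt_one (by positivity) hβθ).mul_left _)]
  gcongr with n
  calc ENNReal.ofReal ((exp β - 1) * exp β ^ n) * μ {ω | (n : ℕ∞) < T ω}
      ≤ ENNReal.ofReal ((exp β - 1) * exp β ^ n) * ENNReal.ofReal (C * θ ^ n) := by
        gcongr
        exact htail n
    _ = ENNReal.ofReal ((exp β - 1) * C * (exp β * θ) ^ n) := by
        rw [← ENNReal.ofReal_mul (mul_nonneg he (pow_nonneg (exp_pos β).le n)), mul_pow]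
        ring_nf

end ExponentialMoments

/-- **Exponential moments of meeting times, uniformly in the perturbation.** -/
theorem meeting_time_exponential_moments {N : ℕ}
    (A : Matrix (Fin N) (Fin N) ℝ) (hA : IsTransMat A) (hAerg : UniformlyErgodic A)
    (γ : ℝ) (hγ : γ ∈ Set.Ioo (0 : ℝ) 1) :
    ∀ ε : ℝ, 0 < ε → ∃ βt : ℝ, 0 < βt ∧
      ∀ B : Matrix (Fin N) (Fin N) ℝ, IsTransMat B → (∀ i j, γ * A i j ≤ B i j) →
        ∀ (Ω : Type) [MeasurableSpace Ω]
          (μ : Fin N → Fin N → Measure Ω) (X Y : ℕ → Ω → Fin N),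
          (∀ x y, IsProbabilityMeasure (μ x y)) →
          (∀ (t : ℕ) (i : Fin N), MeasurableSet {ω | X t ω = i}) →
          (∀ (t : ℕ) (i : Fin N), MeasurableSet {ω | Y t ω = i}) →
          (∀ x y, μ x y {ω | X 0 ω = x ∧ Y 0 ω = y} = 1) →
          (∀ x y, IsPairChain B (μ x y) X Y) →
          ∀ β : ℝ, 0 ≤ β → β ≤ βt → ∀ x y : Fin N,
            ∫⁻ ω, expVal β (meetTime X Y 0 ω) ∂(μ x y) ≤ ENNReal.ofReal (1 + ε) := by
  intro ε hε
  obtain ⟨m, hm, i₀, δ, hδ0, hδ1, hdoeblin⟩ := hAerg.exists_uniform_doeblin hA.1 hγ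
  have hq0 : 0 < 1 - δ ^ 2 := by nlinarith
  have hθ : (1 - δ ^ 2) ^ (m⁻¹ : ℝ) < 1 :=
    Real.rpow_lt_one hq0.le (by nlinarith) (by positivity)
  obtain ⟨βt, hβt, hβ⟩ := exists_pos_forall_geom_bound hθ (1 - δ ^ 2)⁻¹ hε
  refine ⟨βt, hβt, fun B hB hAB Ω _ μ X Y hμ hX hY _ hchain β hβ0 hββt x y => ?_⟩
  have := hμ x y
  obtain ⟨hβθ, hβε⟩ := hβ β hβ0 hββt
  refine (lintegral_expVal_le_of_tail hβ0 (fun n => ?_) (inv_nonneg.mpr hq0.le) (by positivity)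
    hβθ ((hchain x y).measure_lt_meetTime_le hB.1 hX hY hm hδ0.le hδ1 (hdoeblin B hAB))).trans
    (ENNReal.ofReal_le_ofReal (by linarith))
  exact setOf_coe_lt_meetTime (X := X) (Y := Y) n ▸ measurableSet_apart hX hY n

end DiscreteEBSDE
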